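/- The metric g = -dt² + dr² + (1 - (t²+r²)/α²)² dz² + r² dφ² has Einstein tensor of dust form: G_{ab} = ρ u_a u_b with u = ∂_t and ρ = 4/(α²(1 - (t²+r²)/α²)), on the region t² + r² < α². -/

import Mathlib

noncomputable section

namespace SzekeresDust

/-- Points of the spacetime, in coordinates `x = (t, r, φ, z)`. -/
abbrev Pt := Fin 4 → ℝ

/-- Metric: a matrix-valued function of the point. -/
abbrev Metric := Pt → Matrix (Fin 4) (Fin 4) ℝ

/-- Partial derivative `∂ᵢ f` of a scalar function. -/
def pd (i : Fin 4) (f : Pt → ℝ) (x : Pt) : ℝ := fderiv ℝ f x (Pi.single i 1)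

/-- Inverse metric `g^{ab}`. -/
def ginv (g : Metric) (x : Pt) : Matrix (Fin 4) (Fin 4) ℝ := (g x)⁻¹

/-- Christoffel symbols `Γ^a_{bc}` of the Levi-Civita connection of `g`. -/
def christoffel (g : Metric) (x : Pt) (a b c : Fin 4) : ℝ :=
  (1 / 2) * ∑ d, ginv g x a d *
    (pd b (fun y => g y d c) x + pd c (fun y => g y d b) x - pd d (fun y => g y b c) x)

/-- Riemann curvature tensor `R^a_{bcd}`. -/
def riemann (g : Metric) (x : Pt) (a b c d : Fin 4) : ℝ :=
  pd c (fun y => christoffel g y a d b) x - pd d (fun y => christoffel g y a c b) x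
    + ∑ e, (christoffel g x a c e * christoffel g x e d b
      - christoffel g x a d e * christoffel g x e c b)

/-- Ricci tensor `R_{bd} = R^a_{bad}`. -/
def ricci (g : Metric) (x : Pt) (b d : Fin 4) : ℝ := ∑ a, riemann g x a b a d

/-- Scalar curvature `R = g^{bd} R_{bd}`. -/
def scalarCurv (g : Metric) (x : Pt) : ℝ := ∑ b, ∑ d, ginv g x b d * ricci g x b d

/-- Einstein tensor `G_{ab} = R_{ab} - (1/2) R g_{ab}`. -/
def einstein (g : Metric) (x : Pt) : Matrix (Fin 4) (Fin 4) ℝ :=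
  Matrix.of fun a b => ricci g x a b - (1 / 2) * scalarCurv g x * g x a b

/-- The inhomogeneous Szekeres dust metric
`g = -dt² + dr² + (1 - (t²+r²)/α²)² dz² + r² dφ²`, in coordinates
`(t, r, φ, z)`. -/
def gSzekeres (α : ℝ) : Metric := fun x =>
  Matrix.diagonal ![-1, 1, (x 1) ^ 2, (1 - ((x 0) ^ 2 + (x 1) ^ 2) / α ^ 2) ^ 2]

/-- The unit timelike covector `u_a` corresponding to `u = ∂_t`. -/
def uCov : Fin 4 → ℝ := ![-1, 0, 0, 0]

/-! The metric is diagonal, `g = diag(-1, 1, r², F²)` with `F = warp α = 1 - (t² + r²)/α²`,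
so `Γ^a_{bc} = (δ_{ac} ∂_b g_{aa} + δ_{ab} ∂_c g_{aa} - δ_{bc} ∂_a g_{bb}) / (2 g_{aa})` and
only six families of Christoffel symbols survive. On the open set `r > 0, F > 0` these closed
forms hold identically, so they may be differentiated term by term. The result is
`R_{ab} = 2/(α² F) · (g_{ab} + 2 u_a u_b)`, whose trace is `R = 4/(α² F)`; in
`G = Ric - (R/2) g` the `g` terms cancel and only `4/(α² F) · u_a u_b` is left. -/

section PartialDerivative

variable {f g : Pt → ℝ} {x : Pt} (i : Fin 4)

theorem pd_congr_of_eventuallyEq (h : f =ᶠ[nhds x] g) : pd i f x = pd i g x := by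
  rw [pd, pd, h.fderiv_eq]

@[simp] theorem pd_const (c : ℝ) : pd i (fun _ => c) x = 0 := by
  simp [pd]

@[simp] theorem pd_apply (j : Fin 4) : pd i (fun y => y j) x = if j = i then 1 else 0 := by
  rw [pd, (hasFDerivAt_apply j x).fderiv]
  exact Pi.single_apply i 1 j

theorem pd_neg : pd i (fun y => -f y) x = -pd i f x := by
  simp [pd]

theorem pd_add (hf : DifferentiableAt ℝ f x) (hg : DifferentiableAt ℝ g x) :
    pd i (fun y => f y + g y) x = pd i f x + pd i g x := by
  simp [pd, fderiv_fun_add hf hg]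

theorem pd_sub (hf : DifferentiableAt ℝ f x) (hg : DifferentiableAt ℝ g x) :
    pd i (fun y => f y - g y) x = pd i f x - pd i g x := by
  simp [pd, fderiv_fun_sub hf hg]

theorem pd_mul (hf : DifferentiableAt ℝ f x) (hg : DifferentiableAt ℝ g x) :
    pd i (fun y => f y * g y) x = pd i f x * g x + f x * pd i g x := by
  simp only [pd, fderiv_fun_mul hf hg, add_apply, smul_apply, smul_eq_mul]
  ring

theorem pd_div_const (hf : DifferentiableAt ℝ f x) (c : ℝ) :
    pd i (fun y => f y / c) x = pd i f x / c := by
  simp only [pd, div_eq_mul_inv, fderiv_mul_const hf, smul_apply, smul_eq_mul]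
  ring

theorem pd_pow (hf : DifferentiableAt ℝ f x) (n : ℕ) :
    pd i (fun y => f y ^ n) x = n * f x ^ (n - 1) * pd i f x := by
  simp [pd, fderiv_fun_pow n hf]

theorem pd_inv (hf : DifferentiableAt ℝ f x) (hx : f x ≠ 0) :
    pd i (fun y => (f y)⁻¹) x = -pd i f x / f x ^ 2 := by
  have hcomp := fderiv_comp (g := fun s : ℝ => s⁻¹) x (differentiableAt_inv hx) hf
  simp only [pd, Function.comp_def] at hcomp ⊢
  rw [hcomp]
  simp only [fderiv_inv, ContinuousLinearMap.comp_apply,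
    ContinuousLinearMap.toSpanSingleton_apply, smul_eq_mul]
  ring

theorem pd_div (hf : DifferentiableAt ℝ f x) (hg : DifferentiableAt ℝ g x) (hx : g x ≠ 0) :
    pd i (fun y => f y / g y) x = (pd i f x * g x - f x * pd i g x) / g x ^ 2 := by
  simp only [div_eq_mul_inv]
  rw [pd_mul i hf (hg.fun_inv hx), pd_inv i hg hx]
  field_simp
  ring

end PartialDerivative

section DiagonalMetric

open Matrix

variable {v : Pt → Fin 4 → ℝ} {x : Pt}

theorem pd_diagonal_apply (i a b : Fin 4) :
    pd i (fun y => diagonal (v y) a b) x = if a = b then pd i (fun y => v y a) x else 0 := by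
  by_cases hab : a = b
  · subst hab
    simp
  · simp [hab]

theorem ginv_diagonal (hv : ∀ a, v x a ≠ 0) :
    ginv (fun y => diagonal (v y)) x = diagonal (v x)⁻¹ := by
  refine inv_eq_right_inv ?_
  rw [diagonal_mul_diagonal, ← diagonal_one]
  congr 1
  ext a
  exact mul_inv_cancel₀ (hv a)

theorem christoffel_diagonal (hv : ∀ a, v x a ≠ 0) (a b c : Fin 4) :
    christoffel (fun y => diagonal (v y)) x a b c =
      (v x a)⁻¹ / 2 * ((if a = c then pd b (fun y => v y a) x else 0)
        + (if a = b then pd c (fun y => v y a) x else 0)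
        - (if b = c then pd a (fun y => v y b) x else 0)) := by
  simp only [christoffel, ginv_diagonal hv, pd_diagonal_apply]
  simp only [one_div, diagonal_apply, Pi.inv_apply, ite_mul, zero_mul, Finset.sum_ite_eq,
    Finset.mem_univ, ↓reduceIte]
  ring

end DiagonalMetric

section Szekeres

variable {α : ℝ} {x : Pt}

def warp (α : ℝ) (y : Pt) : ℝ := 1 - ((y 0) ^ 2 + (y 1) ^ 2) / α ^ 2

def szekeresDiag (α : ℝ) (y : Pt) : Fin 4 → ℝ := ![-1, 1, (y 1) ^ 2, warp α y ^ 2]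

theorem gSzekeres_eq_diagonal (α : ℝ) :
    gSzekeres α = fun y => Matrix.diagonal (szekeresDiag α y) := rfl

theorem gSzekeres_apply (a b : Fin 4) :
    gSzekeres α x a b = if a = b then szekeresDiag α x a else 0 :=
  Matrix.diagonal_apply _ a b

def region (α : ℝ) : Set Pt := {y | (y 0) ^ 2 + (y 1) ^ 2 < α ^ 2 ∧ 0 < y 1}

theorem isOpen_region (α : ℝ) : IsOpen (region α) :=
  (isOpen_lt (by fun_prop) (by fun_prop)).and (isOpen_lt (by fun_prop) (by fun_prop))

theorem warp_pos (hα : α ≠ 0) (hx : x ∈ region α) : 0 < warp α x := by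
  rw [warp, sub_pos, div_lt_one (by positivity)]
  exact hx.1

theorem szekeresDiag_ne_zero (hr : x 1 ≠ 0) (hw : warp α x ≠ 0) (a : Fin 4) :
    szekeresDiag α x a ≠ 0 := by
  fin_cases a <;> simp [szekeresDiag, hr, hw]

@[fun_prop] theorem differentiable_warp (α : ℝ) : Differentiable ℝ (warp α) := by
  unfold warp
  fun_prop

@[simp] theorem pd_warp (i : Fin 4) :
    pd i (fun y => warp α y) x =
      -2 * ((if 0 = i then x 0 else 0) + (if 1 = i then x 1 else 0)) / α ^ 2 := by
  unfold warp
  simp (disch := fun_prop) only [pd_sub, pd_add, pd_div_const, pd_pow, pd_const, pd_apply]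
  split_ifs <;> push_cast <;> ring

def szekeresΓ (α : ℝ) (a b c : Fin 4) (y : Pt) : ℝ :=
  if a = 0 ∧ b = 3 ∧ c = 3 then -2 * y 0 * warp α y / α ^ 2
  else if a = 1 ∧ b = 3 ∧ c = 3 then 2 * y 1 * warp α y / α ^ 2
  else if a = 1 ∧ b = 2 ∧ c = 2 then -y 1
  else if a = 2 ∧ (b = 1 ∧ c = 2 ∨ b = 2 ∧ c = 1) then (y 1)⁻¹
  else if a = 3 ∧ (b = 0 ∧ c = 3 ∨ b = 3 ∧ c = 0) then -2 * y 0 / (α ^ 2 * warp α y)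
  else if a = 3 ∧ (b = 1 ∧ c = 3 ∨ b = 3 ∧ c = 1) then -2 * y 1 / (α ^ 2 * warp α y)
  else 0

theorem ginv_gSzekeres (hr : x 1 ≠ 0) (hw : warp α x ≠ 0) :
    ginv (gSzekeres α) x = Matrix.diagonal (szekeresDiag α x)⁻¹ :=
  ginv_diagonal (szekeresDiag_ne_zero hr hw)

theorem christoffel_gSzekeres (hr : x 1 ≠ 0) (hw : warp α x ≠ 0) (a b c : Fin 4) :
    christoffel (gSzekeres α) x a b c = szekeresΓ α a b c x := by
  rw [gSzekeres_eq_diagonal, christoffel_diagonal (szekeresDiag_ne_zero hr hw)]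
  fin_cases a <;> fin_cases b <;> fin_cases c <;>
    simp (disch := fun_prop) [szekeresDiag, szekeresΓ, pd_pow] <;> field_simp

theorem pd_christoffel_gSzekeres (hα : α ≠ 0) (hx : x ∈ region α) (i a b c : Fin 4) :
    pd i (fun y => christoffel (gSzekeres α) y a b c) x =
      pd i (fun y => szekeresΓ α a b c y) x :=
  pd_congr_of_eventuallyEq i <| Filter.eventuallyEq_of_mem ((isOpen_region α).mem_nhds hx)
    fun _ hy => christoffel_gSzekeres hy.2.ne' (warp_pos hα hy).ne' a b c

theorem ricci_gSzekeres (hα : α ≠ 0) (hx : x ∈ region α) (b d : Fin 4) :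
    ricci (gSzekeres α) x b d =
      2 / (α ^ 2 * warp α x) * (gSzekeres α x b d + 2 * uCov b * uCov d) := by
  have hr : x 1 ≠ 0 := hx.2.ne'
  have hw : warp α x ≠ 0 := (warp_pos hα hx).ne'
  have hden : α ^ 2 * warp α x ≠ 0 := by positivity
  simp only [ricci, riemann, pd_christoffel_gSzekeres hα hx, christoffel_gSzekeres hr hw,
    Fin.sum_univ_four]
  fin_cases b <;> fin_cases d <;>
    simp +decide only [szekeresΓ, Fin.isValue, if_true, if_false] <;>
    simp (disch := first | fun_prop (disch := assumption) | assumption) only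
      [pd_neg, pd_mul, pd_div, pd_div_const, pd_inv, pd_pow, pd_const, pd_apply, pd_warp] <;>
    simp [gSzekeres_apply, szekeresDiag, uCov] <;> field_simp <;> ring

theorem scalarCurv_gSzekeres (hα : α ≠ 0) (hx : x ∈ region α) :
    scalarCurv (gSzekeres α) x = 4 / (α ^ 2 * warp α x) := by
  have hr : x 1 ≠ 0 := hx.2.ne'
  have hw : warp α x ≠ 0 := (warp_pos hα hx).ne'
  simp only [scalarCurv, ginv_gSzekeres hr hw, ricci_gSzekeres hα hx, Matrix.diagonal_apply,
    Pi.inv_apply, ite_mul, zero_mul, Finset.sum_ite_eq, Finset.mem_univ, ↓reduceIte,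
    Fin.sum_univ_four, gSzekeres_apply, szekeresDiag, uCov, Fin.isValue, Matrix.cons_val]
  field_simp
  ring

end Szekeres

/-- The metric `g = -dt² + dr² + (1 - (t²+r²)/α²)² dz² + r² dφ²` has Einstein
tensor of dust form: `G_{ab} = ρ u_a u_b` with `u = ∂_t` and
`ρ = 4/(α²(1 - (t²+r²)/α²))`, on the region `t² + r² < α²` (with `r > 0` for
validity of cylindrical coordinates). -/
theorem szekeres_is_dust_solution (α : ℝ) (hα : α ≠ 0) :
    ∀ x : Pt, (x 0) ^ 2 + (x 1) ^ 2 < α ^ 2 → 0 < x 1 →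
      einstein (gSzekeres α) x =
        (4 / (α ^ 2 * (1 - ((x 0) ^ 2 + (x 1) ^ 2) / α ^ 2))) •
          Matrix.vecMulVec uCov uCov := by
  intro x ht hr
  have hx : x ∈ region α := ⟨ht, hr⟩
  change _ = (4 / (α ^ 2 * warp α x)) • _
  ext a b
  rw [einstein, Matrix.of_apply, ricci_gSzekeres hα hx, scalarCurv_gSzekeres hα hx,
    Matrix.smul_apply, Matrix.vecMulVec_apply, smul_eq_mul]
  ring

end SzekeresDust

end
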